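/- arXiv:1301.0034 — 5 statements merged into one kernel-verified Lean document; each statement's English description precedes it below -/
import Mathlib

section
/- If ρ ∈ H is nonzero and Lρ = λρ for some complex number λ with |λ| = 1, then Aρ = λρ and Bρ = λρ. -/
/-!
Since `A` and `B` are contractions, `A ρ` and `B ρ` lie in the closed ball of radius `‖ρ‖`, while
their convex combination `q • A ρ + p • B ρ = λ • ρ` lies on its boundary sphere. A (complex)
inner product space is strictly convex, so this forces `A ρ = B ρ`, and then `A ρ = λ • ρ`.
-/

theorem eq_of_norm_combo_eq {E : Type*} [NormedAddCommGroup E] [NormedSpace ℝ E]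
    [StrictConvexSpace ℝ E] {x y : E} {r a b : ℝ} (hx : ‖x‖ ≤ r) (hy : ‖y‖ ≤ r)
    (ha : 0 < a) (hb : 0 < b) (hab : a + b = 1) (h : ‖a • x + b • y‖ = r) : x = y := by
  by_contra hne
  exact (norm_combo_lt_of_ne hx hy hne ha hb hab).ne h

theorem ContinuousLinearMap.apply_eq_smul_of_combo_apply_eq_smul {E : Type*}
    [NormedAddCommGroup E] [NormedSpace ℂ E] [StrictConvexSpace ℝ E] {A B : E →L[ℂ] E}
    (hA : ‖A‖ ≤ 1) (hB : ‖B‖ ≤ 1) {a b : ℝ} (ha : 0 < a) (hb : 0 < b) (hab : a + b = 1)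
    {x : E} {c : ℂ} (hc : ‖c‖ = 1) (h : ((a : ℂ) • A + (b : ℂ) • B) x = c • x) :
    A x = c • x ∧ B x = c • x := by
  have hcombo : a • A x + b • B x = c • x := by
    simpa only [add_apply, smul_apply, Complex.coe_smul] using h
  have hAB : A x = B x := by
    refine eq_of_norm_combo_eq (A.le_of_opNorm_le hA x) (B.le_of_opNorm_le hB x) ha hb hab ?_
    rw [hcombo, norm_smul, hc]
  have hBx : B x = c • x := by
    rwa [hAB, ← add_smul, hab, one_smul] at hcombo
  exact ⟨hAB.trans hBx, hBx⟩

theorem stmt0_general {H : Type*} [NormedAddCommGroup H] [InnerProductSpace ℂ H]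
    (A B : H →L[ℂ] H) (hA : ‖A‖ ≤ 1) (hB : ‖B‖ ≤ 1)
    (p q : ℝ) (hp : 0 < p) (hp1 : p < 1) (hq : q = 1 - p)
    (L : H →L[ℂ] H) (hL : L = (q : ℂ) • A + (p : ℂ) • B)
    (ρ : H) (lam : ℂ) (hlam : ‖lam‖ = 1)
    (hLρ : L ρ = lam • ρ) :
    A ρ = lam • ρ ∧ B ρ = lam • ρ := by
  let _ := InnerProductSpace.complexToReal (G := H)
  subst hL hq
  exact A.apply_eq_smul_of_combo_apply_eq_smul hA hB (by linarith) hp (by ring) hlam hLρ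

/-- Let `H` be a nonzero finite-dimensional complex inner product space,
`A, B` operators with `‖A‖ ≤ 1`, `‖B‖ ≤ 1`, `1` an eigenvalue of both, and a nonzero `ρ₁`
with `A* ρ₁ = ρ₁`, `B* ρ₁ = ρ₁`.  Let `L = qA + pB` with `0 < p < 1`, `q = 1 - p`.
If `ρ ≠ 0` and `L ρ = λ ρ` with `|λ| = 1`, then `A ρ = λ ρ` and `B ρ = λ ρ`. -/
theorem stmt0 {H : Type*} [NormedAddCommGroup H] [InnerProductSpace ℂ H]
    [FiniteDimensional ℂ H] [Nontrivial H]
    (A B : H →L[ℂ] H) (hA : ‖A‖ ≤ 1) (hB : ‖B‖ ≤ 1)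
    (hAeig : ∃ v : H, v ≠ 0 ∧ A v = v) (hBeig : ∃ v : H, v ≠ 0 ∧ B v = v)
    (ρ₁ : H) (hρ₁ : ρ₁ ≠ 0)
    (hAadj : ContinuousLinearMap.adjoint A ρ₁ = ρ₁)
    (hBadj : ContinuousLinearMap.adjoint B ρ₁ = ρ₁)
    (p q : ℝ) (hp : 0 < p) (hp1 : p < 1) (hq : q = 1 - p)
    (L : H →L[ℂ] H) (hL : L = (q : ℂ) • A + (p : ℂ) • B)
    (ρ : H) (hρ : ρ ≠ 0) (lam : ℂ) (hlam : ‖lam‖ = 1)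
    (hLρ : L ρ = lam • ρ) :
    A ρ = lam • ρ ∧ B ρ = lam • ρ :=
  stmt0_general A B hA hB p q hp hp1 hq L hL ρ lam hlam hLρ
end

section
/- If the algebraic multiplicity of 1 as an eigenvalue of B equals 1, then 1 is an eigenvalue of L and its algebraic multiplicity as an eigenvalue of L equals 1; equivalently, the generalized eigenspace ⋃_{m≥1} ker((L − id)^m) of L for the eigenvalue 1 is one-dimensional. -/
/-- The algebraic multiplicity of `μ` as an eigenvalue of `T`: the dimension of the
generalized eigenspace `⋃_{m ≥ 1} ker ((T - μ·id)^m)`. -/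
noncomputable def algMult {H : Type*} [AddCommGroup H] [Module ℂ H]
    (T : H →ₗ[ℂ] H) (μ : ℂ) : ℕ :=
  Module.finrank ℂ
    (⨆ m : ℕ, LinearMap.ker ((T - μ • (1 : Module.End ℂ H)) ^ m) : Submodule ℂ H)

open scoped InnerProductSpace

section Aux

variable {H : Type*} [NormedAddCommGroup H] [InnerProductSpace ℂ H]

/-- If `‖T‖ ≤ 1` and the adjoint of `T` fixes `ρ`, then `T` fixes `ρ`. -/
lemma fix_of_adj_fix [FiniteDimensional ℂ H] {T : H →L[ℂ] H} (hT : ‖T‖ ≤ 1) {ρ : H}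
    (h : ContinuousLinearMap.adjoint T ρ = ρ) : T ρ = ρ := by
  have hn : ‖T ρ‖ ≤ ‖ρ‖ := by
    calc ‖T ρ‖ ≤ ‖T‖ * ‖ρ‖ := T.le_opNorm ρ
    _ ≤ 1 * ‖ρ‖ := by gcongr
    _ = ‖ρ‖ := one_mul _
  have hre : RCLike.re ⟪T ρ, ρ⟫_ℂ = ‖ρ‖ ^ 2 := by
    rw [← ContinuousLinearMap.adjoint_inner_right, h, inner_self_eq_norm_sq]
  have key : ‖T ρ - ρ‖ ^ 2 ≤ 0 := by
    rw [@norm_sub_sq ℂ, hre]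
    nlinarith [norm_nonneg (T ρ), norm_nonneg ρ]
  have := pow_eq_zero_iff (n := 2) (by norm_num) |>.mp (le_antisymm key (by positivity))
  rwa [norm_eq_zero, sub_eq_zero] at this

/-- If `‖T‖ ≤ 1` and `T` fixes `ρ`, then the adjoint of `T` fixes `ρ`. -/
lemma fix_adj_of_fix [FiniteDimensional ℂ H] {T : H →L[ℂ] H} (hT : ‖T‖ ≤ 1) {ρ : H}
    (h : T ρ = ρ) : ContinuousLinearMap.adjoint T ρ = ρ := by
  apply fix_of_adj_fix (T := ContinuousLinearMap.adjoint T)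
  · rwa [LinearIsometryEquiv.norm_map]
  · rwa [ContinuousLinearMap.adjoint_adjoint]

/-- A contraction has no nontrivial Jordan block at the eigenvalue `1`. -/
lemma jordan_trivial [FiniteDimensional ℂ H] {T : H →L[ℂ] H} (hT : ‖T‖ ≤ 1) {x y : H}
    (hy : T y = y) (hxy : y = T x - x) : y = 0 := by
  have hadj : ContinuousLinearMap.adjoint T y = y := fix_adj_of_fix hT hy
  have : ⟪y, y⟫_ℂ = 0 := by
    calc ⟪y, y⟫_ℂ = ⟪y, T x⟫_ℂ - ⟪y, x⟫_ℂ := by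
          nth_rewrite 2 [hxy]; rw [inner_sub_right]
    _ = ⟪ContinuousLinearMap.adjoint T y, x⟫_ℂ - ⟪y, x⟫_ℂ := by
        rw [ContinuousLinearMap.adjoint_inner_left]
    _ = 0 := by rw [hadj]; ring
  exact inner_self_eq_zero.mp this

/-- For a contraction, the generalized eigenspace at `1` is the eigenspace. -/
lemma genEig_eq_ker [FiniteDimensional ℂ H] {T : H →L[ℂ] H} (hT : ‖T‖ ≤ 1) :
    (⨆ m : ℕ, LinearMap.ker (((T : H →ₗ[ℂ] H) - (1:ℂ) • (1 : Module.End ℂ H)) ^ m))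
      = LinearMap.ker ((T : H →ₗ[ℂ] H) - (1:ℂ) • (1 : Module.End ℂ H)) := by
  set S : Module.End ℂ H := (T : H →ₗ[ℂ] H) - (1:ℂ) • (1 : Module.End ℂ H) with hSdef
  have hS : ∀ x : H, S x = T x - x := by
    intro x
    simp [hSdef, LinearMap.sub_apply, LinearMap.smul_apply, Module.End.one_apply]
  have hker : ∀ m : ℕ, LinearMap.ker (S ^ m) ≤ LinearMap.ker S := by
    intro m
    induction m with
    | zero =>
      intro x hx
      have hx0 : x = 0 := by simpa using hx
      simp [hx0]
    | succ n ih =>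
      intro x hx
      rcases Nat.eq_zero_or_pos n with hn | hn
      · subst hn; simpa [pow_one] using hx
      · have hx' : (S ^ n) (S x) = 0 := by
          have : (S ^ (n + 1)) x = (S ^ n) (S x) := by
            rw [pow_succ, Module.End.mul_apply]
          rw [← this]; exact hx
        have hSx : S x ∈ LinearMap.ker S := ih hx'
        have hfix : T (S x) = S x := by
          have := LinearMap.mem_ker.mp hSx
          rw [hS] at this
          exact sub_eq_zero.mp this
        have : S x = 0 := jordan_trivial hT hfix (hS x)
        exact LinearMap.mem_ker.mpr this
  apply le_antisymm
  · exact iSup_le hker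
  · have := le_iSup (fun m : ℕ => LinearMap.ker (S ^ m)) 1
    simpa [pow_one] using this

/-- Strict convexity: a fixed point of a proper convex combination of two contractions
is a fixed point of each of them (here: of `B`). -/
lemma convex_fix {A B : H →L[ℂ] H} (hA : ‖A‖ ≤ 1) (hB : ‖B‖ ≤ 1)
    {p q : ℝ} (hp : 0 < p) (hq0 : 0 < q) (hpq : q + p = 1) {x : H}
    (hx : (q : ℂ) • A x + (p : ℂ) • B x = x) : B x = x := by
  have hna : ‖A x‖ ≤ ‖x‖ := by
    calc ‖A x‖ ≤ ‖A‖ * ‖x‖ := A.le_opNorm x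
    _ ≤ 1 * ‖x‖ := by gcongr
    _ = ‖x‖ := one_mul _
  have hnb : ‖B x‖ ≤ ‖x‖ := by
    calc ‖B x‖ ≤ ‖B‖ * ‖x‖ := B.le_opNorm x
    _ ≤ 1 * ‖x‖ := by gcongr
    _ = ‖x‖ := one_mul _
  have ha : RCLike.re ⟪x, A x⟫_ℂ ≤ ‖x‖ ^ 2 := by
    calc RCLike.re ⟪x, A x⟫_ℂ ≤ ‖x‖ * ‖A x‖ := re_inner_le_norm (𝕜 := ℂ) x (A x)
    _ ≤ ‖x‖ * ‖x‖ := by gcongr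
    _ = ‖x‖ ^ 2 := (sq ‖x‖).symm
  have hb : RCLike.re ⟪x, B x⟫_ℂ ≤ ‖x‖ ^ 2 := by
    calc RCLike.re ⟪x, B x⟫_ℂ ≤ ‖x‖ * ‖B x‖ := re_inner_le_norm (𝕜 := ℂ) x (B x)
    _ ≤ ‖x‖ * ‖x‖ := by gcongr
    _ = ‖x‖ ^ 2 := (sq ‖x‖).symm
  have hsum : q * RCLike.re ⟪x, A x⟫_ℂ + p * RCLike.re ⟪x, B x⟫_ℂ = ‖x‖ ^ 2 := by
    have h1 : ⟪x, x⟫_ℂ = (q : ℂ) * ⟪x, A x⟫_ℂ + (p : ℂ) * ⟪x, B x⟫_ℂ := by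
      nth_rewrite 2 [← hx]
      rw [inner_add_right, inner_smul_right, inner_smul_right]
    have h2 : RCLike.re ⟪x, x⟫_ℂ = ‖x‖ ^ 2 := inner_self_eq_norm_sq x
    rw [h1] at h2
    simp only [RCLike.re_to_complex, Complex.add_re, Complex.mul_re,
      Complex.ofReal_re, Complex.ofReal_im, zero_mul, sub_zero] at h2 ⊢
    linarith
  have hbeq : RCLike.re ⟪x, B x⟫_ℂ = ‖x‖ ^ 2 := by nlinarith
  have key : ‖B x - x‖ ^ 2 ≤ 0 := by
    rw [@norm_sub_sq ℂ, inner_re_symm, hbeq]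
    nlinarith [norm_nonneg (B x), norm_nonneg x]
  have := pow_eq_zero_iff (n := 2) (by norm_num) |>.mp
    (le_antisymm key (by positivity))
  rwa [norm_eq_zero, sub_eq_zero] at this

end Aux

/-- In the setting of Theorem 4.1 (`L = qA + pB`, `0 < p < 1`, `q = 1 - p`,
`‖A‖, ‖B‖ ≤ 1`, `1` an eigenvalue of `A` and `B`, and a common nonzero fixed point `ρ₁` of the
adjoints), if the algebraic multiplicity of `1` as an eigenvalue of `B` equals `1`, then `1`
is an eigenvalue of `L` of algebraic multiplicity `1`. -/
theorem stmt1 {H : Type*} [NormedAddCommGroup H] [InnerProductSpace ℂ H]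
    [FiniteDimensional ℂ H] [Nontrivial H]
    (A B : H →L[ℂ] H) (hA : ‖A‖ ≤ 1) (hB : ‖B‖ ≤ 1)
    (hAeig : ∃ v : H, v ≠ 0 ∧ A v = v) (hBeig : ∃ v : H, v ≠ 0 ∧ B v = v)
    (ρ₁ : H) (hρ₁ : ρ₁ ≠ 0)
    (hAadj : ContinuousLinearMap.adjoint A ρ₁ = ρ₁)
    (hBadj : ContinuousLinearMap.adjoint B ρ₁ = ρ₁)
    (p q : ℝ) (hp : 0 < p) (hp1 : p < 1) (hq : q = 1 - p)
    (L : H →L[ℂ] H) (hL : L = (q : ℂ) • A + (p : ℂ) • B)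
    (hmultB : algMult (B : H →ₗ[ℂ] H) 1 = 1) :
    (∃ v : H, v ≠ 0 ∧ L v = v) ∧ algMult (L : H →ₗ[ℂ] H) 1 = 1 := by
  have hq0 : 0 < q := by rw [hq]; linarith
  have hpq : q + p = 1 := by rw [hq]; ring
  -- L is a contraction
  have hLnorm : ‖L‖ ≤ 1 := by
    rw [hL]
    calc ‖(q:ℂ) • A + (p:ℂ) • B‖ ≤ ‖(q:ℂ) • A‖ + ‖(p:ℂ) • B‖ := norm_add_le _ _
    _ = q * ‖A‖ + p * ‖B‖ := by
        rw [norm_smul ((q:ℂ)) A, norm_smul ((p:ℂ)) B, Complex.norm_real, Complex.norm_real,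
          Real.norm_eq_abs, Real.norm_eq_abs, abs_of_pos hq0, abs_of_pos hp]
    _ ≤ q * 1 + p * 1 := by gcongr
    _ = 1 := by rw [mul_one, mul_one, hpq]
  -- ρ₁ is a fixed point of L
  have hc : (q : ℂ) + (p : ℂ) = 1 := by
    rw [← Complex.ofReal_add, hpq, Complex.ofReal_one]
  have hLadj : ContinuousLinearMap.adjoint L ρ₁ = ρ₁ := by
    rw [hL, map_add, LinearIsometryEquiv.map_smulₛₗ, LinearIsometryEquiv.map_smulₛₗ]
    simp only [ContinuousLinearMap.add_apply, ContinuousLinearMap.smul_apply,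
      hAadj, hBadj, RingHom.id_apply]
    rw [Complex.conj_ofReal, Complex.conj_ofReal, ← add_smul, hc, one_smul]
  have hLρ : L ρ₁ = ρ₁ := fix_of_adj_fix hLnorm hLadj
  refine ⟨⟨ρ₁, hρ₁, hLρ⟩, ?_⟩
  -- reduce to eigenspaces
  unfold algMult at hmultB ⊢
  rw [genEig_eq_ker hLnorm]
  rw [genEig_eq_ker hB] at hmultB
  set kerL : Submodule ℂ H :=
    LinearMap.ker ((L : H →ₗ[ℂ] H) - (1:ℂ) • (1 : Module.End ℂ H)) with hkerL
  set kerB : Submodule ℂ H :=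
    LinearMap.ker ((B : H →ₗ[ℂ] H) - (1:ℂ) • (1 : Module.End ℂ H)) with hkerB
  have hmemL : ∀ x : H, x ∈ kerL ↔ L x = x := by
    intro x
    rw [hkerL, LinearMap.mem_ker]
    constructor
    · intro h
      have : L x - x = 0 := by simpa using h
      exact sub_eq_zero.mp this
    · intro h; simp [h]
  have hmemB : ∀ x : H, x ∈ kerB ↔ B x = x := by
    intro x
    rw [hkerB, LinearMap.mem_ker]
    constructor
    · intro h
      have : B x - x = 0 := by simpa using h
      exact sub_eq_zero.mp this
    · intro h; simp [h]
  have hle : kerL ≤ kerB := by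
    intro x hx
    have hLx : L x = x := (hmemL x).mp hx
    rw [hL, ContinuousLinearMap.add_apply, ContinuousLinearMap.smul_apply,
      ContinuousLinearMap.smul_apply] at hLx
    exact (hmemB x).mpr (convex_fix hA hB hp hq0 hpq hLx)
  have hub : Module.finrank ℂ kerL ≤ 1 := hmultB ▸ Submodule.finrank_mono hle
  have hne : kerL ≠ ⊥ := by
    intro hbot
    have : ρ₁ ∈ kerL := (hmemL ρ₁).mpr hLρ
    rw [hbot] at this
    exact hρ₁ (Submodule.mem_bot ℂ |>.mp this)
  have hpos : 0 < Module.finrank ℂ kerL := by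
    rcases Nat.eq_zero_or_pos (Module.finrank ℂ kerL) with h0 | h
    · exact absurd (Submodule.finrank_eq_zero.mp h0) hne
    · exact h
  omega
end

section
/- If λ = 1 is the only eigenvalue of B with |λ| = 1, then 1 is an eigenvalue of L and every eigenvalue λ of L with |λ| = 1 satisfies λ = 1. -/
/-!
Since `L† = q A† + p B†` fixes `ρ₁ ≠ 0`, the operator `L - 1` has a nonzero cokernel, hence
(in finite dimension) a nonzero kernel. If `L v = λ v` with `|λ| = 1`, then `L v` has the norm of
`v` while being a proper convex combination of `A v` and `B v`, both of norm at most `‖v‖`; strict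
convexity of the Hilbert norm forces `A v = B v`, so `v` is an eigenvector of `B` for `λ`.
-/

open ContinuousLinearMap

instance InnerProductSpace.complex_strictConvexSpace_real {H : Type*} [NormedAddCommGroup H]
    [InnerProductSpace ℂ H] : StrictConvexSpace ℝ H := by
  let := InnerProductSpace.rclikeToReal ℂ H
  infer_instance

theorem ContinuousLinearMap.exists_apply_eq_self_of_adjoint_apply_eq_self {𝕜 E : Type*}
    [RCLike 𝕜] [NormedAddCommGroup E] [InnerProductSpace 𝕜 E] [CompleteSpace E]
    [FiniteDimensional 𝕜 E]
    {T : E →L[𝕜] E} {x : E} (hx : x ≠ 0) (hTx : adjoint T x = x) :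
    ∃ v : E, v ≠ 0 ∧ T v = v := by
  have hker_adj : (adjoint (T - 1)).ker ≠ ⊥ :=
    (Submodule.ne_bot_iff _).mpr ⟨x, by simp [hTx, adjoint_one], hx⟩
  have hker : (T - 1).ker ≠ ⊥ := by
    rw [← orthogonal_range, Ne, Submodule.orthogonal_eq_bot_iff] at hker_adj
    exact mt LinearMap.ker_eq_bot_iff_range_eq_top.mp hker_adj
  obtain ⟨v, hv, hv0⟩ := (Submodule.ne_bot_iff _).mp hker
  exact ⟨v, hv0, sub_eq_zero.mp hv⟩

theorem ContinuousLinearMap.apply_eq_apply_of_norm_combo_apply_eq {E : Type*}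
    [NormedAddCommGroup E] [NormedSpace ℂ E] [StrictConvexSpace ℝ E] {A B : E →L[ℂ] E}
    (hA : ‖A‖ ≤ 1) (hB : ‖B‖ ≤ 1) {a b : ℝ} (ha : 0 < a) (hb : 0 < b) (hab : a + b = 1)
    {v : E} (hv : ‖((a : ℂ) • A + (b : ℂ) • B) v‖ = ‖v‖) : A v = B v := by
  by_contra hne
  have hAv : ‖A v‖ ≤ ‖v‖ := by simpa using A.le_of_opNorm_le hA v
  have hBv : ‖B v‖ ≤ ‖v‖ := by simpa using B.le_of_opNorm_le hB v
  have hlt := norm_combo_lt_of_ne hAv hBv hne ha hb hab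
  simp only [add_apply, smul_apply, Complex.coe_smul] at hv
  exact hlt.ne hv

theorem stmt2_general {H : Type*} [NormedAddCommGroup H] [InnerProductSpace ℂ H]
    [FiniteDimensional ℂ H]
    (A B : H →L[ℂ] H) (hA : ‖A‖ ≤ 1) (hB : ‖B‖ ≤ 1)
    (ρ₁ : H) (hρ₁ : ρ₁ ≠ 0)
    (hAadj : ContinuousLinearMap.adjoint A ρ₁ = ρ₁)
    (hBadj : ContinuousLinearMap.adjoint B ρ₁ = ρ₁)
    (p q : ℝ) (hp : 0 < p) (hp1 : p < 1) (hq : q = 1 - p)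
    (L : H →L[ℂ] H) (hL : L = (q : ℂ) • A + (p : ℂ) • B)
    (hBonly : ∀ (lam : ℂ) (v : H), v ≠ 0 → B v = lam • v → ‖lam‖ = 1 → lam = 1) :
    (∃ v : H, v ≠ 0 ∧ L v = v) ∧
      ∀ (lam : ℂ) (v : H), v ≠ 0 → L v = lam • v → ‖lam‖ = 1 → lam = 1 := by
  have hqp : q + p = 1 := by rw [hq]; ring
  have hcombo (x : H) : (q : ℂ) • x + (p : ℂ) • x = x := by
    rw [← add_smul, ← Complex.ofReal_add, hqp, Complex.ofReal_one, one_smul]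
  have hLadj : adjoint L ρ₁ = ρ₁ := by
    simp only [hL, map_add, map_smulₛₗ, add_apply, smul_apply, hAadj, hBadj, Complex.conj_ofReal]
    exact hcombo ρ₁
  refine ⟨exists_apply_eq_self_of_adjoint_apply_eq_self hρ₁ hLadj, ?_⟩
  intro lam v hv hLv hlam
  have hAB : A v = B v := by
    refine apply_eq_apply_of_norm_combo_apply_eq hA hB (by linarith) hp hqp ?_
    rw [← hL, hLv, norm_smul, hlam, one_mul]
  have hLB : L v = B v := by
    rw [hL, add_apply, smul_apply, smul_apply, hAB, hcombo]
  exact hBonly lam v hv (hLB ▸ hLv) hlam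

/-- In the setting of Theorem 4.1 (`L = qA + pB`, `0 < p < 1`, `q = 1 - p`,
`‖A‖, ‖B‖ ≤ 1`, `1` an eigenvalue of `A` and `B`, and a common nonzero fixed point `ρ₁` of the
adjoints), if `λ = 1` is the only eigenvalue of `B` with `|λ| = 1`, then `1` is an eigenvalue
of `L` and every eigenvalue `λ` of `L` with `|λ| = 1` satisfies `λ = 1`. -/
theorem stmt2 {H : Type*} [NormedAddCommGroup H] [InnerProductSpace ℂ H]
    [FiniteDimensional ℂ H] [Nontrivial H]
    (A B : H →L[ℂ] H) (hA : ‖A‖ ≤ 1) (hB : ‖B‖ ≤ 1)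
    (hAeig : ∃ v : H, v ≠ 0 ∧ A v = v) (hBeig : ∃ v : H, v ≠ 0 ∧ B v = v)
    (ρ₁ : H) (hρ₁ : ρ₁ ≠ 0)
    (hAadj : ContinuousLinearMap.adjoint A ρ₁ = ρ₁)
    (hBadj : ContinuousLinearMap.adjoint B ρ₁ = ρ₁)
    (p q : ℝ) (hp : 0 < p) (hp1 : p < 1) (hq : q = 1 - p)
    (L : H →L[ℂ] H) (hL : L = (q : ℂ) • A + (p : ℂ) • B)
    (hBonly : ∀ (lam : ℂ) (v : H), v ≠ 0 → B v = lam • v → ‖lam‖ = 1 → lam = 1) :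
    (∃ v : H, v ≠ 0 ∧ L v = v) ∧
      ∀ (lam : ℂ) (v : H), v ≠ 0 → L v = lam • v → ‖lam‖ = 1 → lam = 1 :=
  stmt2_general A B hA hB ρ₁ hρ₁ hAadj hBadj p q hp hp1 hq L hL hBonly
end

section
/- For every n×n complex matrix ρ and all k, ν ∈ ℝ, Tr(L_{k,k+ν}(ρ)) = e^{iν}·Tr(ρ) − 2i·sin(ν)·Tr(B₂*B₂ρ). In particular the trace of L_{k,k+ν}(ρ) does not depend on p, and L_{k,k} is trace-preserving. -/
open Matrix Complex

/-! The cross terms `Tr(B₁ρB₂*)` and `Tr(B₂ρB₁*)` vanish because `B₂*B₁ = U*Π₂Π₁U = 0`, so the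
dephased part and the coherent part of `L_{k,k'}` both have trace
`e^{i(k'−k)} Tr(B₁*B₁ρ) + e^{−i(k'−k)} Tr(B₂*B₂ρ)`, and they are weighted by `p + q = 1`.
Unitarity of `U` gives `B₁*B₁ = 1 − B₂*B₂`, and `e^{iν} − e^{−iν} = 2i sin ν`. -/

theorem IsStarProjection.star_mul_mul_one_sub_mul {R : Type*} [Ring R] [StarRing R] {P : R}
    (hP : IsStarProjection P) (U V : R) : star (P * U) * ((1 - P) * V) = 0 := by
  rw [star_mul, hP.isSelfAdjoint.star_eq, mul_assoc, ← mul_assoc P, hP.mul_one_sub_self,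
    zero_mul, mul_zero]

theorem IsStarProjection.star_mul_self_add_star_mul_self {R : Type*} [Ring R] [StarRing R]
    {P : R} (hP : IsStarProjection P) (U : R) :
    star (P * U) * (P * U) + star ((1 - P) * U) * ((1 - P) * U) = star U * U := by
  simp only [star_mul, hP.isSelfAdjoint.star_eq, hP.one_sub.isSelfAdjoint.star_eq, mul_assoc,
    ← mul_assoc P P, ← mul_assoc (1 - P) (1 - P), hP.isIdempotentElem.eq,
    hP.one_sub.isIdempotentElem.eq, ← mul_add, ← add_mul, add_sub_cancel]
  rw [one_mul]

theorem Matrix.isStarProjection_diagonal {n α : Type*} [Fintype n] [DecidableEq n]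
    [NonUnitalNonAssocSemiring α] [StarRing α] {d : n → α} (hd : ∀ i, IsStarProjection (d i)) :
    IsStarProjection (diagonal d) where
  isIdempotentElem := by
    rw [IsIdempotentElem, diagonal_mul_diagonal]
    exact congrArg diagonal (funext fun i ↦ (hd i).isIdempotentElem.eq)
  isSelfAdjoint := by
    rw [IsSelfAdjoint, star_eq_conjTranspose, diagonal_conjTranspose]
    exact congrArg diagonal (funext fun i ↦ (hd i).isSelfAdjoint.star_eq)

theorem Complex.star_exp_mul_ofReal (z : ℂ) (x : ℝ) : star (exp (z * x)) = exp (star z * x) := by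
  rw [star_def, ← exp_conj, map_mul, conj_ofReal]

theorem Complex.exp_mul_I_sub_exp_neg_mul_I (x : ℂ) :
    exp (I * x) - exp (-I * x) = 2 * I * sin x := by
  rw [mul_comm 2 I, mul_assoc, two_sin]; ring_nf; rw [I_sq]; ring

theorem Matrix.trace_smul_add_smul_mul_mul_conjTranspose {ι R : Type*} [Fintype ι] [CommRing R]
    [StarRing R] {B₁ B₂ : Matrix ι ι R} (h : B₁ᴴ * B₂ = 0) (a b c d : R) (ρ : Matrix ι ι R) :
    trace ((a • B₁ + b • B₂) * ρ * (c • B₁ + d • B₂)ᴴ) =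
      a * star c * trace (B₁ᴴ * B₁ * ρ) + b * star d * trace (B₂ᴴ * B₂ * ρ) := by
  have h' : B₂ᴴ * B₁ = 0 := by
    rw [← conjTranspose_conjTranspose B₁, ← conjTranspose_mul, h, conjTranspose_zero]
  simp only [conjTranspose_add, conjTranspose_smul, Matrix.add_mul, Matrix.mul_add,
    Matrix.smul_mul, Matrix.mul_smul, trace_add, trace_smul, smul_eq_mul]
  rw [trace_mul_cycle B₁ ρ B₁ᴴ, trace_mul_cycle B₁ ρ B₂ᴴ, trace_mul_cycle B₂ ρ B₁ᴴ,
    trace_mul_cycle B₂ ρ B₂ᴴ, h, h', zero_mul, trace_zero]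
  ring

section Poqrw

variable {ι : Type*} [Fintype ι] {B₁ B₂ : Matrix ι ι ℂ}

theorem Matrix.trace_exp_smul_add_exp_smul_mul_mul_conjTranspose (h : B₁ᴴ * B₂ = 0)
    (ρ : Matrix ι ι ℂ) (k k' : ℝ) :
    trace ((exp (-I * k) • B₁ + exp (I * k) • B₂) * ρ *
        (exp (-I * k') • B₁ + exp (I * k') • B₂)ᴴ) =
      exp (I * (k' - k)) * trace (B₁ᴴ * B₁ * ρ) + exp (-I * (k' - k)) * trace (B₂ᴴ * B₂ * ρ) := by
  rw [trace_smul_add_smul_mul_mul_conjTranspose h, star_exp_mul_ofReal, star_exp_mul_ofReal,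
    ← exp_add, ← exp_add]
  simp only [star_neg, star_def, conj_I, neg_neg]
  ring_nf

variable [DecidableEq ι]

theorem Matrix.trace_poqrw (horth : B₁ᴴ * B₂ = 0) (hsum : B₁ᴴ * B₁ + B₂ᴴ * B₂ = 1) {p q : ℂ}
    (hpq : p + q = 1) (ρ : Matrix ι ι ℂ) (k k' : ℝ) :
    trace (p • (exp (I * (k' - k)) • (B₁ * ρ * B₁ᴴ) + exp (-I * (k' - k)) • (B₂ * ρ * B₂ᴴ)) +
        q • ((exp (-I * k) • B₁ + exp (I * k) • B₂) * ρ *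
          (exp (-I * k') • B₁ + exp (I * k') • B₂)ᴴ)) =
      exp (I * (k' - k)) * trace ρ - 2 * I * sin (k' - k) * trace (B₂ᴴ * B₂ * ρ) := by
  have hB₁ : trace (B₁ᴴ * B₁ * ρ) = trace ρ - trace (B₂ᴴ * B₂ * ρ) := by
    rw [eq_sub_iff_add_eq, ← trace_add, ← Matrix.add_mul, hsum, Matrix.one_mul]
  rw [trace_add, trace_smul, trace_smul, trace_exp_smul_add_exp_smul_mul_mul_conjTranspose horth,
    trace_add, trace_smul, trace_smul, trace_mul_cycle B₁, trace_mul_cycle B₂,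
    ← exp_mul_I_sub_exp_neg_mul_I, hB₁]
  linear_combination (exp (I * (k' - k)) * (trace ρ - trace (B₂ᴴ * B₂ * ρ)) +
    exp (-I * (k' - k)) * trace (B₂ᴴ * B₂ * ρ)) * hpq

end Poqrw

theorem stmt10_general {n n₁ : ℕ}
    (U : Matrix (Fin n) (Fin n) ℂ) (hU : U ∈ Matrix.unitaryGroup (Fin n) ℂ)
    (p q : ℝ) (hq : q = 1 - p)
    (P1 P2 B1 B2 : Matrix (Fin n) (Fin n) ℂ)
    (hP1 : P1 = Matrix.diagonal (fun i : Fin n => if (i : ℕ) < n₁ then (1 : ℂ) else 0))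
    (hP2 : P2 = 1 - P1) (hB1 : B1 = P1 * U) (hB2 : B2 = P2 * U)
    (Uk : ℝ → Matrix (Fin n) (Fin n) ℂ)
    (hUk : ∀ k : ℝ, Uk k = Complex.exp (-Complex.I * k) • B1 + Complex.exp (Complex.I * k) • B2)
    (Lsup : ℝ → ℝ → Matrix (Fin n) (Fin n) ℂ → Matrix (Fin n) (Fin n) ℂ)
    (hLsup : ∀ (k k' : ℝ) ρ, Lsup k k' ρ =
      (p : ℂ) • (Complex.exp (Complex.I * ((k' : ℂ) - (k : ℂ))) • (B1 * ρ * B1ᴴ) +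
        Complex.exp (-Complex.I * ((k' : ℂ) - (k : ℂ))) • (B2 * ρ * B2ᴴ)) +
      (q : ℂ) • (Uk k * ρ * (Uk k')ᴴ)) :
    ∀ (ρ : Matrix (Fin n) (Fin n) ℂ) (k ν : ℝ),
      (Lsup k (k + ν) ρ).trace =
        Complex.exp (Complex.I * ν) * ρ.trace -
          2 * Complex.I * (Real.sin ν : ℂ) * (B2ᴴ * B2 * ρ).trace ∧
      (Lsup k k ρ).trace = ρ.trace := by
  have hP : IsStarProjection P1 := hP1 ▸ isStarProjection_diagonal fun i ↦ by
    split_ifs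
    exacts [.one ℂ, .zero ℂ]
  have horth : B1ᴴ * B2 = 0 := by
    rw [hB1, hB2, hP2]
    exact hP.star_mul_mul_one_sub_mul U U
  have hsum : B1ᴴ * B1 + B2ᴴ * B2 = 1 := by
    rw [hB1, hB2, hP2, ← star_eq_conjTranspose, ← star_eq_conjTranspose,
      hP.star_mul_self_add_star_mul_self U]
    exact Unitary.star_mul_self_of_mem hU
  have hpq : (p : ℂ) + q = 1 := by rw [hq]; push_cast; ring
  have htrace (ρ : Matrix (Fin n) (Fin n) ℂ) (k k' : ℝ) : (Lsup k k' ρ).trace =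
      exp (I * (k' - k)) * ρ.trace - 2 * I * sin (k' - k) * (B2ᴴ * B2 * ρ).trace := by
    rw [hLsup, hUk, hUk]
    exact trace_poqrw horth hsum hpq ρ k k'
  intro ρ k ν
  refine ⟨?_, ?_⟩
  · rw [htrace]; push_cast; ring_nf
  · simpa using htrace ρ k k

/-- With the POQRW superoperator
`L_{k,k'}(ρ) = p(e^{i(k'−k)}B₁ρB₁* + e^{−i(k'−k)}B₂ρB₂*) + q·U_kρU_{k'}*`,
for every `n×n` matrix `ρ` and all `k, ν ∈ ℝ`:
`Tr(L_{k,k+ν}(ρ)) = e^{iν}·Tr(ρ) − 2i·sin(ν)·Tr(B₂*B₂ρ)` (a formula independent of `p`),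
and `L_{k,k}` is trace-preserving. -/
theorem stmt10 {n n₁ : ℕ} (hn₁ : 1 ≤ n₁) (hn : n₁ < n) (n₂ : ℕ) (hn₂ : n₂ = n - n₁)
    (U : Matrix (Fin n) (Fin n) ℂ) (hU : U ∈ Matrix.unitaryGroup (Fin n) ℂ)
    (p q : ℝ) (hp0 : 0 ≤ p) (hp1 : p ≤ 1) (hq : q = 1 - p)
    (P1 P2 B1 B2 : Matrix (Fin n) (Fin n) ℂ)
    (hP1 : P1 = Matrix.diagonal (fun i : Fin n => if (i : ℕ) < n₁ then (1 : ℂ) else 0))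
    (hP2 : P2 = 1 - P1) (hB1 : B1 = P1 * U) (hB2 : B2 = P2 * U)
    (Uk : ℝ → Matrix (Fin n) (Fin n) ℂ)
    (hUk : ∀ k : ℝ, Uk k = Complex.exp (-Complex.I * k) • B1 + Complex.exp (Complex.I * k) • B2)
    (Lsup : ℝ → ℝ → Matrix (Fin n) (Fin n) ℂ → Matrix (Fin n) (Fin n) ℂ)
    (hLsup : ∀ (k k' : ℝ) ρ, Lsup k k' ρ =
      (p : ℂ) • (Complex.exp (Complex.I * ((k' : ℂ) - (k : ℂ))) • (B1 * ρ * B1ᴴ) +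
        Complex.exp (-Complex.I * ((k' : ℂ) - (k : ℂ))) • (B2 * ρ * B2ᴴ)) +
      (q : ℂ) • (Uk k * ρ * (Uk k')ᴴ)) :
    ∀ (ρ : Matrix (Fin n) (Fin n) ℂ) (k ν : ℝ),
      (Lsup k (k + ν) ρ).trace =
        Complex.exp (Complex.I * ν) * ρ.trace -
          2 * Complex.I * (Real.sin ν : ℂ) * (B2ᴴ * B2 * ρ).trace ∧
      (Lsup k k ρ).trace = ρ.trace :=
  stmt10_general U hU p q hq P1 P2 B1 B2 hP1 hP2 hB1 hB2 Uk hUk Lsup hLsup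
end

section
/- For all k, ν ∈ ℝ the following hold for the Hilbert–Schmidt inner products with L_{k,k+ν}(γ₁): (i) ⟨γ₁, L_{k,k+ν}(γ₁)⟩ = (2n₂cos ν)/n + ((n₁ − n₂)/n)e^{iν}; (ii) ⟨γ_l, L_{k,k+ν}(γ₁)⟩ = 0 for 2 ≤ l ≤ n₁; (iii) ⟨γ_l, L_{k,k+ν}(γ₁)⟩ = 2n₁ i sin(ν)/√(n·l(l−1)) for n₁ + 1 ≤ l ≤ n; (iv) ⟨E, L_{k,k+ν}(γ₁)⟩ = 0 for every n×n matrix E whose diagonal entries are all zero. -/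
open Matrix Complex

/-- The normalized diagonal Gell-Mann matrices in dimension `n`: `γ₁ = I/√n`, and for
`2 ≤ l ≤ n`, `γ_l = h_l/√(l(l−1))` where `h_l` is diagonal with `(h_l)_{ii} = 1` for `i < l`
(1-based), `(h_l)_{ll} = −(l−1)`, and `0` elsewhere. -/
noncomputable def gellMannDiag (n l : ℕ) : Matrix (Fin n) (Fin n) ℂ :=
  if l = 1 then ((Real.sqrt n : ℝ) : ℂ)⁻¹ • 1
  else ((Real.sqrt (l * (l - 1)) : ℝ) : ℂ)⁻¹ •
    Matrix.diagonal (fun i : Fin n => if (i : ℕ) + 1 < l then 1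
      else if (i : ℕ) + 1 = l then -((l : ℂ) - 1) else 0)

/-- The Hilbert–Schmidt inner product on `n×n` complex matrices: `⟨X, Y⟩ = Tr(X* Y)`. -/
noncomputable def hsInner {n : ℕ} (X Y : Matrix (Fin n) (Fin n) ℂ) : ℂ :=
  (Xᴴ * Y).trace

/-!
Unitarity of `U` makes it cancel from every term of `L_{k,k'}(ρ)` when `ρ` is scalar: with
`θ = k' − k`, the map sends `γ₁` to the diagonal matrix that is `e^{iθ}/√n` on the first `n₁`
coordinates and `e^{−iθ}/√n` on the others. Part (iv) is then immediate, and the other inner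
products are weighted sums of the two phases. The weights of `h_l` sum to `0` over the first `m`
coordinates when `l ≤ m` and to `m` otherwise, which gives (ii) and (iii); for (i),
`e^{iν} + e^{−iν} = 2 cos ν`.
-/

theorem star_cexp_I_mul (x : ℝ) : star (exp (I * x)) = exp (-I * x) := by
  rw [star_def, ← exp_conj]; simp

theorem star_cexp_neg_I_mul (x : ℝ) : star (exp (-I * x)) = exp (I * x) := by
  rw [star_def, ← exp_conj]; simp

theorem cexp_I_mul_add_cexp_neg_I_mul (x : ℝ) : exp (I * x) + exp (-I * x) = 2 * Real.cos x := by
  rw [mul_comm I, exp_mul_I, neg_mul, mul_comm I, ← neg_mul, exp_mul_I, cos_neg, sin_neg,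
    ofReal_cos]
  ring

theorem cexp_I_mul_sub_cexp_neg_I_mul (x : ℝ) :
    exp (I * x) - exp (-I * x) = 2 * I * Real.sin x := by
  rw [mul_comm I, exp_mul_I, neg_mul, mul_comm I, ← neg_mul, exp_mul_I, cos_neg, sin_neg,
    ofReal_sin]
  ring

section TwoBlock

variable {n : ℕ} {α : Type*}

def twoBlock (n₁ : ℕ) (a b : α) : Fin n → α := fun i => if (i : ℕ) < n₁ then a else b

theorem twoBlock_mul [Mul α] (n₁ : ℕ) (a b c d : α) :
    twoBlock (n := n) n₁ a b * twoBlock n₁ c d = twoBlock n₁ (a * c) (b * d) := by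
  ext i; simp only [twoBlock, Pi.mul_apply]; split_ifs <;> rfl

theorem star_twoBlock [Star α] (n₁ : ℕ) (a b : α) :
    star (twoBlock (n := n) n₁ a b) = twoBlock n₁ (star a) (star b) := by
  ext i; simp only [twoBlock, Pi.star_apply]; split_ifs <;> rfl

theorem twoBlock_add [Add α] (n₁ : ℕ) (a b c d : α) :
    twoBlock (n := n) n₁ a b + twoBlock n₁ c d = twoBlock n₁ (a + c) (b + d) := by
  ext i; simp only [twoBlock, Pi.add_apply]; split_ifs <;> rfl

theorem smul_twoBlock {R : Type*} [SMul R α] (r : R) (n₁ : ℕ) (a b : α) :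
    r • twoBlock (n := n) n₁ a b = twoBlock n₁ (r • a) (r • b) := by
  ext i; simp only [twoBlock, Pi.smul_apply]; split_ifs <;> rfl

theorem sum_mul_twoBlock [CommRing α] {n₁ : ℕ} (h : n₁ ≤ n) (f : ℕ → α) (a b : α) :
    ∑ i : Fin n, f i * twoBlock n₁ a b i = a * ∑ i ∈ Finset.range n₁, f i +
      b * (∑ i ∈ Finset.range n, f i - ∑ i ∈ Finset.range n₁, f i) := by
  simp only [twoBlock]
  rw [← Finset.sum_Ico_eq_sub _ h,
    Fin.sum_univ_eq_sum_range (fun i => f i * if i < n₁ then a else b),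
    ← Finset.sum_range_add_sum_Ico _ h, Finset.mul_sum, Finset.mul_sum]
  congr 1
  · refine Finset.sum_congr rfl fun i hi => ?_
    rw [if_pos (Finset.mem_range.mp hi), mul_comm]
  · refine Finset.sum_congr rfl fun i hi => ?_
    rw [if_neg (Finset.mem_Ico.mp hi).1.not_gt, mul_comm]

end TwoBlock

theorem mul_mul_conjTranspose_mul_of_mem_unitaryGroup {ι α : Type*} [Fintype ι] [DecidableEq ι]
    [CommRing α] [StarRing α] {U : Matrix ι ι α} (hU : U ∈ unitaryGroup ι α)
    (A B : Matrix ι ι α) : A * U * (B * U)ᴴ = A * Bᴴ := by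
  rw [conjTranspose_mul, Matrix.mul_assoc, ← Matrix.mul_assoc U, ← star_eq_conjTranspose,
    mem_unitaryGroup_iff.mp hU, Matrix.one_mul]

section Walk

variable {n : ℕ}

-- `walkUnitary B₁ B₂ k` is the paper's `U_k` and `poqrwMap p q B₁ B₂ k k'` its `L_{k,k'}`.
noncomputable def walkUnitary (B₁ B₂ : Matrix (Fin n) (Fin n) ℂ) (k : ℝ) :
    Matrix (Fin n) (Fin n) ℂ :=
  exp (-I * k) • B₁ + exp (I * k) • B₂

noncomputable def poqrwMap (p q : ℝ) (B₁ B₂ : Matrix (Fin n) (Fin n) ℂ) (k k' : ℝ)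
    (ρ : Matrix (Fin n) (Fin n) ℂ) : Matrix (Fin n) (Fin n) ℂ :=
  (p : ℂ) • (exp (I * ((k' : ℂ) - (k : ℂ))) • (B₁ * ρ * B₁ᴴ) +
    exp (-I * ((k' : ℂ) - (k : ℂ))) • (B₂ * ρ * B₂ᴴ)) +
  (q : ℂ) • (walkUnitary B₁ B₂ k * ρ * (walkUnitary B₁ B₂ k')ᴴ)

theorem walkUnitary_diagonal_twoBlock_mul (n₁ : ℕ) (U : Matrix (Fin n) (Fin n) ℂ) (k : ℝ) :
    walkUnitary (diagonal (twoBlock n₁ 1 0) * U) (diagonal (twoBlock n₁ 0 1) * U) k =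
      diagonal (twoBlock n₁ (exp (-I * k)) (exp (I * k))) * U := by
  rw [walkUnitary, ← Matrix.smul_mul, ← Matrix.smul_mul, ← Matrix.add_mul, ← diagonal_smul,
    ← diagonal_smul, diagonal_add, ← Pi.add_def, smul_twoBlock, smul_twoBlock, twoBlock_add]
  simp

theorem poqrwMap_smul_one {n₁ : ℕ} {U : Matrix (Fin n) (Fin n) ℂ}
    (hU : U ∈ unitaryGroup (Fin n) ℂ) {p q : ℝ} (hpq : p + q = 1) (k k' : ℝ) (c : ℂ) :
    poqrwMap p q (diagonal (twoBlock n₁ 1 0) * U) (diagonal (twoBlock n₁ 0 1) * U) k k'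
        (c • 1) =
      diagonal (twoBlock n₁ (c * exp (I * (k' - k))) (c * exp (-I * (k' - k)))) := by
  simp only [poqrwMap, walkUnitary_diagonal_twoBlock_mul, Matrix.mul_smul, Matrix.smul_mul,
    Matrix.mul_one, mul_mul_conjTranspose_mul_of_mem_unitaryGroup hU, diagonal_conjTranspose,
    diagonal_mul_diagonal', ← Pi.mul_def, star_twoBlock, twoBlock_mul, ← diagonal_smul,
    smul_twoBlock, diagonal_add, ← Pi.add_def, twoBlock_add, star_cexp_I_mul, star_cexp_neg_I_mul]
  have hpq' : (p : ℂ) + q = 1 := by exact_mod_cast hpq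
  have hphase : exp (-I * k) * exp (I * k') = exp (I * (k' - k)) := by
    rw [← exp_add]; ring_nf
  have hphase' : exp (I * k) * exp (-I * k') = exp (-I * (k' - k)) := by
    rw [← exp_add]; ring_nf
  congr 2 <;> simp only [hphase, hphase', smul_eq_mul, star_one, star_zero, mul_one, mul_zero]
  · linear_combination (c * exp (I * (k' - k))) * hpq'
  · linear_combination (c * exp (-I * (k' - k))) * hpq'

end Walk

section GellMann

variable {n : ℕ}

-- The diagonal entry of `h_l` at the 0-based index `i`, i.e. `(h_l)_{i+1,i+1}`.
def gellMannWeight (l i : ℕ) : ℂ :=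
  if i + 1 < l then 1 else if i + 1 = l then -((l : ℂ) - 1) else 0

theorem star_gellMannWeight (l i : ℕ) : star (gellMannWeight l i) = gellMannWeight l i := by
  unfold gellMannWeight; split_ifs <;> simp

theorem sum_range_gellMannWeight {l : ℕ} (hl : 1 ≤ l) (m : ℕ) :
    ∑ i ∈ Finset.range m, gellMannWeight l i = if l ≤ m then 0 else (m : ℂ) := by
  induction m with
  | zero => simp
  | succ m ih =>
    rw [Finset.sum_range_succ, ih, gellMannWeight]
    by_cases hlm : l ≤ m
    · simp [hlm, show l ≤ m + 1 by omega, show ¬ m + 1 < l by omega, show m + 1 ≠ l by omega]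
    by_cases hl' : m + 1 = l
    · subst hl'; simp
    · simp [hlm, show m + 1 < l by omega, show ¬ l ≤ m + 1 by omega]

theorem hsInner_diagonal_left (d : Fin n → ℂ) (Y : Matrix (Fin n) (Fin n) ℂ) :
    hsInner (diagonal d) Y = ∑ i, star (d i) * Y i i := by
  simp [hsInner, trace, diagonal_conjTranspose, diagonal_mul]

theorem hsInner_diagonal_right (X : Matrix (Fin n) (Fin n) ℂ) (d : Fin n → ℂ) :
    hsInner X (diagonal d) = ∑ i, star (X i i) * d i := by
  simp [hsInner, trace, mul_diagonal]

theorem gellMannDiag_one : gellMannDiag n 1 = ((√n : ℝ) : ℂ)⁻¹ • 1 :=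
  if_pos rfl

theorem gellMannDiag_of_ne_one {l : ℕ} (hl : l ≠ 1) :
    gellMannDiag n l =
      diagonal fun i : Fin n => ((√(l * (l - 1)) : ℝ) : ℂ)⁻¹ * gellMannWeight l i := by
  rw [gellMannDiag, if_neg hl, ← diagonal_smul]
  rfl

theorem hsInner_gellMannDiag_one_diagonal_twoBlock {n₁ : ℕ} (h : n₁ ≤ n) (a b : ℂ) :
    hsInner (gellMannDiag n 1) (diagonal (twoBlock n₁ a b)) =
      ((√n : ℝ) : ℂ)⁻¹ * (n₁ * a + (n - n₁) * b) := by
  rw [gellMannDiag_one, smul_one_eq_diagonal, hsInner_diagonal_left]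
  simp only [diagonal_apply_eq, star_inv₀, star_def, conj_ofReal]
  rw [sum_mul_twoBlock h (fun _ => ((√n : ℝ) : ℂ)⁻¹)]
  simp only [Finset.sum_const, Finset.card_range, nsmul_eq_mul]
  ring

theorem hsInner_gellMannDiag_diagonal_twoBlock {l n₁ : ℕ} (hl : 2 ≤ l) (hln : l ≤ n)
    (h : n₁ ≤ n) (a b : ℂ) :
    hsInner (gellMannDiag n l) (diagonal (twoBlock n₁ a b)) =
      ((√(l * (l - 1)) : ℝ) : ℂ)⁻¹ * (a - b) * if l ≤ n₁ then 0 else (n₁ : ℂ) := by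
  rw [gellMannDiag_of_ne_one (by omega), hsInner_diagonal_left]
  simp only [diagonal_apply_eq, star_mul', star_gellMannWeight, star_inv₀, star_def, conj_ofReal,
    mul_assoc]
  rw [← Finset.mul_sum, sum_mul_twoBlock h, sum_range_gellMannWeight (by omega),
    sum_range_gellMannWeight (by omega), if_pos hln]
  ring

end GellMann

theorem stmt11_general {n n₁ : ℕ} (hn₁ : 1 ≤ n₁) (hn : n₁ < n) (n₂ : ℕ) (hn₂ : n₂ = n - n₁)
    (U : Matrix (Fin n) (Fin n) ℂ) (hU : U ∈ Matrix.unitaryGroup (Fin n) ℂ)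
    (p q : ℝ) (hq : q = 1 - p)
    (P1 P2 B1 B2 : Matrix (Fin n) (Fin n) ℂ)
    (hP1 : P1 = Matrix.diagonal (fun i : Fin n => if (i : ℕ) < n₁ then (1 : ℂ) else 0))
    (hP2 : P2 = 1 - P1) (hB1 : B1 = P1 * U) (hB2 : B2 = P2 * U)
    (Uk : ℝ → Matrix (Fin n) (Fin n) ℂ)
    (hUk : ∀ k : ℝ, Uk k = Complex.exp (-Complex.I * k) • B1 + Complex.exp (Complex.I * k) • B2)
    (Lsup : ℝ → ℝ → Matrix (Fin n) (Fin n) ℂ → Matrix (Fin n) (Fin n) ℂ)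
    (hLsup : ∀ (k k' : ℝ) ρ, Lsup k k' ρ =
      (p : ℂ) • (Complex.exp (Complex.I * ((k' : ℂ) - (k : ℂ))) • (B1 * ρ * B1ᴴ) +
        Complex.exp (-Complex.I * ((k' : ℂ) - (k : ℂ))) • (B2 * ρ * B2ᴴ)) +
      (q : ℂ) • (Uk k * ρ * (Uk k')ᴴ))
    (k ν : ℝ) :
    hsInner (gellMannDiag n 1) (Lsup k (k + ν) (gellMannDiag n 1)) =
        (2 * n₂ * Real.cos ν) / n + (((n₁ : ℂ) - (n₂ : ℂ)) / n) * Complex.exp (Complex.I * ν) ∧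
    (∀ l : ℕ, 2 ≤ l → l ≤ n₁ →
        hsInner (gellMannDiag n l) (Lsup k (k + ν) (gellMannDiag n 1)) = 0) ∧
    (∀ l : ℕ, n₁ + 1 ≤ l → l ≤ n →
        hsInner (gellMannDiag n l) (Lsup k (k + ν) (gellMannDiag n 1)) =
          2 * n₁ * Complex.I * Real.sin ν / ((Real.sqrt (n * l * (l - 1)) : ℝ) : ℂ)) ∧
    (∀ E : Matrix (Fin n) (Fin n) ℂ, (∀ i, E i i = 0) →
        hsInner E (Lsup k (k + ν) (gellMannDiag n 1)) = 0) := by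
  obtain rfl : Uk = walkUnitary B1 B2 := funext hUk
  obtain rfl : Lsup = poqrwMap p q B1 B2 := funext₃ hLsup
  have hP1' : P1 = diagonal (twoBlock n₁ 1 0) := hP1
  have hP2' : P2 = diagonal (twoBlock n₁ 0 1) := by
    rw [hP2, hP1', ← diagonal_one, diagonal_sub]
    congr 1; ext i; simp only [twoBlock]; split_ifs <;> norm_num
  set s : ℂ := ((√n : ℝ) : ℂ)⁻¹ with hs
  have hL : poqrwMap p q B1 B2 k (k + ν) (gellMannDiag n 1) =
      diagonal (twoBlock n₁ (s * exp (I * ν)) (s * exp (-I * ν))) := by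
    rw [hB1, hB2, hP1', hP2', gellMannDiag_one]
    convert poqrwMap_smul_one hU (by linarith : p + q = 1) k (k + ν) s using 6 <;>
      push_cast <;> ring
  rw [hL]
  refine ⟨?_, fun l hl hln₁ => ?_, fun l hl hln => ?_, fun E hE => ?_⟩
  · have hss : s * s = (n : ℂ)⁻¹ := by
      rw [← mul_inv, ← ofReal_mul, Real.mul_self_sqrt n.cast_nonneg, ofReal_natCast]
    have hn₂' : (n₂ : ℂ) = n - n₁ := by rw [hn₂, Nat.cast_sub hn.le]
    rw [hsInner_gellMannDiag_one_diagonal_twoBlock hn.le, ← hs, hn₂']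
    linear_combination (n₁ * exp (I * ν) + (n - n₁) * exp (-I * ν)) * hss +
      (n : ℂ)⁻¹ * (n - n₁) * cexp_I_mul_add_cexp_neg_I_mul ν
  · rw [hsInner_gellMannDiag_diagonal_twoBlock hl (by omega) hn.le, if_pos hln₁, mul_zero]
  · rw [hsInner_gellMannDiag_diagonal_twoBlock (by omega) hln hn.le, if_neg (by omega),
      ← mul_sub, cexp_I_mul_sub_cexp_neg_I_mul, mul_assoc (n : ℝ), Real.sqrt_mul n.cast_nonneg, ofReal_mul,
      div_eq_mul_inv, mul_inv]
    ring
  · simp [hsInner_diagonal_right, hE]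

/-- Hilbert–Schmidt inner products of `L_{k,k+ν}(γ₁)` with the normalized
diagonal Gell-Mann matrices:
(i) `⟨γ₁, L_{k,k+ν}(γ₁)⟩ = (2n₂ cos ν)/n + ((n₁−n₂)/n)e^{iν}`;
(ii) `⟨γ_l, L_{k,k+ν}(γ₁)⟩ = 0` for `2 ≤ l ≤ n₁`;
(iii) `⟨γ_l, L_{k,k+ν}(γ₁)⟩ = 2n₁ i sin ν / √(n·l(l−1))` for `n₁+1 ≤ l ≤ n`;
(iv) `⟨E, L_{k,k+ν}(γ₁)⟩ = 0` whenever all diagonal entries of `E` vanish. -/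
theorem stmt11 {n n₁ : ℕ} (hn₁ : 1 ≤ n₁) (hn : n₁ < n) (n₂ : ℕ) (hn₂ : n₂ = n - n₁)
    (U : Matrix (Fin n) (Fin n) ℂ) (hU : U ∈ Matrix.unitaryGroup (Fin n) ℂ)
    (p q : ℝ) (hp0 : 0 ≤ p) (hp1 : p ≤ 1) (hq : q = 1 - p)
    (P1 P2 B1 B2 : Matrix (Fin n) (Fin n) ℂ)
    (hP1 : P1 = Matrix.diagonal (fun i : Fin n => if (i : ℕ) < n₁ then (1 : ℂ) else 0))
    (hP2 : P2 = 1 - P1) (hB1 : B1 = P1 * U) (hB2 : B2 = P2 * U)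
    (Uk : ℝ → Matrix (Fin n) (Fin n) ℂ)
    (hUk : ∀ k : ℝ, Uk k = Complex.exp (-Complex.I * k) • B1 + Complex.exp (Complex.I * k) • B2)
    (Lsup : ℝ → ℝ → Matrix (Fin n) (Fin n) ℂ → Matrix (Fin n) (Fin n) ℂ)
    (hLsup : ∀ (k k' : ℝ) ρ, Lsup k k' ρ =
      (p : ℂ) • (Complex.exp (Complex.I * ((k' : ℂ) - (k : ℂ))) • (B1 * ρ * B1ᴴ) +
        Complex.exp (-Complex.I * ((k' : ℂ) - (k : ℂ))) • (B2 * ρ * B2ᴴ)) +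
      (q : ℂ) • (Uk k * ρ * (Uk k')ᴴ))
    (k ν : ℝ) :
    hsInner (gellMannDiag n 1) (Lsup k (k + ν) (gellMannDiag n 1)) =
        (2 * n₂ * Real.cos ν) / n + (((n₁ : ℂ) - (n₂ : ℂ)) / n) * Complex.exp (Complex.I * ν) ∧
    (∀ l : ℕ, 2 ≤ l → l ≤ n₁ →
        hsInner (gellMannDiag n l) (Lsup k (k + ν) (gellMannDiag n 1)) = 0) ∧
    (∀ l : ℕ, n₁ + 1 ≤ l → l ≤ n →
        hsInner (gellMannDiag n l) (Lsup k (k + ν) (gellMannDiag n 1)) =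
          2 * n₁ * Complex.I * Real.sin ν / ((Real.sqrt (n * l * (l - 1)) : ℝ) : ℂ)) ∧
    (∀ E : Matrix (Fin n) (Fin n) ℂ, (∀ i, E i i = 0) →
        hsInner E (Lsup k (k + ν) (gellMannDiag n 1)) = 0) :=
  stmt11_general hn₁ hn n₂ hn₂ U hU p q hq P1 P2 B1 B2 hP1 hP2 hB1 hB2 Uk hUk Lsup hLsup k ν
end
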